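/- Let x₁,x₂,x₃,y₁,y₂,y₃ be indeterminates and let T be the map defined by x̄_j = x_j P_{j−1}/P_j, ȳ_j = y_j P_j/P_{j−1} (P_j as in the discrete Toda system, indices mod 3), and let s₁ be the automorphism s₁(x₁)=x₂(x₁+y₂)/(x₂+y₁), s₁(x₂)=x₁(x₂+y₁)/(x₁+y₂), s₁(y₁)=y₂(x₂+y₁)/(x₁+y₂), s₁(y₂)=y₁(x₁+y₂)/(x₂+y₁), fixing x₃,y₃. Then T ∘ s₁ = s₁ ∘ T as automorphisms of ℂ(x₁,x₂,x₃,y₁,y₂,y₃). -/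

import Mathlib

noncomputable section
set_option synthInstance.maxHeartbeats 1000000
set_option maxHeartbeats 4000000

/-- The rational function field `ℂ(x₁,x₂,x₃,y₁,y₂,y₃)`. -/
abbrev K : Type := FractionRing (MvPolynomial (Fin 6) ℂ)

/-- The generators of `K`. -/
def X (i : Fin 6) : K := algebraMap (MvPolynomial (Fin 6) ℂ) K (MvPolynomial.X i)

def x1 : K := X 0
def x2 : K := X 1
def x3 : K := X 2
def y1 : K := X 3
def y2 : K := X 4
def y3 : K := X 5

/-- The discrete Toda denominators `P_j = Σ_{a=1}^{3}(Π_{k=1}^{a−1} y_{j+k})(Π_{k=a+1}^{3} x_{j+k})`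
(indices mod 3). -/
def P1 : K := x3 * x1 + y2 * x1 + y2 * y3
def P2 : K := x1 * x2 + y3 * x2 + y3 * y1
def P3 : K := x2 * x3 + y1 * x3 + y1 * y2

/-- `x̄_j = x_j P_{j−1}/P_j` (with `P₀ = P₃`). -/
def xb1 : K := x1 * P3 / P1
def xb2 : K := x2 * P1 / P2
def xb3 : K := x3 * P2 / P3

/-- `ȳ_j = y_j P_j/P_{j−1}`. -/
def yb1 : K := y1 * P1 / P3
def yb2 : K := y2 * P2 / P1
def yb3 : K := y3 * P3 / P2

lemma ne_zero_of_repr {a : K} (p : MvPolynomial (Fin 6) ℂ)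
    (hrep : a = algebraMap (MvPolynomial (Fin 6) ℂ) K p)
    (h : MvPolynomial.eval (fun _ => (1:ℂ)) p ≠ 0) : a ≠ 0 := by
  intro h0
  apply h
  have hp : p = 0 := IsFractionRing.to_map_eq_zero_iff.mp (hrep ▸ h0)
  rw [hp]; simp

lemma hP1 : P1 ≠ 0 :=
  ne_zero_of_repr (MvPolynomial.X 2 * MvPolynomial.X 0 + MvPolynomial.X 4 * MvPolynomial.X 0
      + MvPolynomial.X 4 * MvPolynomial.X 5)
    (by simp [P1, x1, x3, y2, y3, X, map_add, map_mul]) (by norm_num)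

lemma hP2 : P2 ≠ 0 :=
  ne_zero_of_repr (MvPolynomial.X 0 * MvPolynomial.X 1 + MvPolynomial.X 5 * MvPolynomial.X 1
      + MvPolynomial.X 5 * MvPolynomial.X 3)
    (by simp [P2, x1, x2, y3, y1, X, map_add, map_mul]) (by norm_num)

lemma hP3 : P3 ≠ 0 :=
  ne_zero_of_repr (MvPolynomial.X 1 * MvPolynomial.X 2 + MvPolynomial.X 3 * MvPolynomial.X 2
      + MvPolynomial.X 3 * MvPolynomial.X 4)
    (by simp [P3, x2, x3, y1, y2, X, map_add, map_mul]) (by norm_num)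

lemma hA : x1 + y2 ≠ 0 :=
  ne_zero_of_repr (MvPolynomial.X 0 + MvPolynomial.X 4)
    (by simp [x1, y2, X, map_add]) (by norm_num)

lemma hB : x2 + y1 ≠ 0 :=
  ne_zero_of_repr (MvPolynomial.X 1 + MvPolynomial.X 3)
    (by simp [x2, y1, X, map_add]) (by norm_num)

lemma mapne (e : K ≃ₐ[ℂ] K) {a : K} (h : a ≠ 0) : e a ≠ 0 :=
  fun h0 => h (e.injective (h0.trans (map_zero e).symm))

/-- the discrete Toda evolution `T` commutes with the Bäcklund
transformation `s₁`: `T ∘ s₁ = s₁ ∘ T`. -/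
theorem stmt12 (T s : K ≃ₐ[ℂ] K)
    (hT1 : T x1 = xb1) (hT2 : T x2 = xb2) (hT3 : T x3 = xb3)
    (hT4 : T y1 = yb1) (hT5 : T y2 = yb2) (hT6 : T y3 = yb3)
    (hs1 : s x1 = x2 * (x1 + y2) / (x2 + y1))
    (hs2 : s x2 = x1 * (x2 + y1) / (x1 + y2))
    (hs3 : s x3 = x3)
    (hs4 : s y1 = y2 * (x2 + y1) / (x1 + y2))
    (hs5 : s y2 = y1 * (x1 + y2) / (x2 + y1))
    (hs6 : s y3 = y3) :
    ∀ k : K, T (s k) = s (T k) := by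
  -- `s` fixes `P₂` and `P₃`, and multiplies `P₁` by an explicit factor.
  have hsP2 : s P2 = P2 := by
    rw [P2, map_add, map_add, map_mul, map_mul, map_mul, hs1, hs2, hs4, hs6]
    field_simp [hA, hB]
    ring
  have hsP3 : s P3 = P3 := by
    rw [P3, map_add, map_add, map_mul, map_mul, map_mul, hs2, hs3, hs4, hs5]
    field_simp [hA, hB]
  have hsP1 : s P1 = (x1 + y2) * (x2 * x3 * (x2 + y1) + y1 * x2 * (x1 + y2)
      + y1 * y3 * (x2 + y1)) / ((x2 + y1) * (x2 + y1)) := by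
    rw [P1, map_add, map_add, map_mul, map_mul, map_mul, hs1, hs3, hs5, hs6]
    field_simp [hA, hB]
  have hQ : x2 * x3 * (x2 + y1) + y1 * x2 * (x1 + y2) + y1 * y3 * (x2 + y1) ≠ 0 := by
    intro h
    apply mapne s hP1
    rw [hsP1, h, mul_zero, zero_div]
  have hTA : T (x1 + y2) ≠ 0 := mapne T hA
  have eTA : T (x1 + y2) = (x1 * P3 + y2 * P2) / P1 := by
    rw [map_add, hT1, hT5, xb1, yb2, ← add_div]
  have hR1 : x1 * P3 + y2 * P2 ≠ 0 := by
    intro h; exact hTA (by rw [eTA, h, zero_div])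
  have hTB : T (x2 + y1) ≠ 0 := mapne T hB
  have eTB : T (x2 + y1) = (x2 * P1 * P3 + P2 * (y1 * P1)) / (P2 * P3) := by
    rw [map_add, hT2, hT4, xb2, yb1, div_add_div _ _ hP2 hP3]
  have hR2 : x2 * P1 * P3 + P2 * (y1 * P1) ≠ 0 := by
    intro h; exact hTB (by rw [eTB, h, zero_div])
  -- the six generator identities
  have g1 : T (s x1) = s (T x1) := by
    rw [hT1, xb1, map_div₀, map_mul, hsP1, hsP3, hs1,
        map_div₀, map_mul, map_add, map_add, hT1, hT2, hT4, hT5]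
    rw [xb1, xb2, yb1, yb2, ← add_div, div_add_div _ _ hP2 hP3]
    field_simp [hP1, hP2, hP3, hA, hB, hQ, hR1, hR2]
    simp only [P1, P2, P3]
    ring
  have g2 : T (s x2) = s (T x2) := by
    rw [hT2, xb2, map_div₀, map_mul, hsP1, hsP2, hs2,
        map_div₀, map_mul, map_add, map_add, hT1, hT2, hT4, hT5]
    rw [xb1, xb2, yb1, yb2, ← add_div, div_add_div _ _ hP2 hP3]
    field_simp [hP1, hP2, hP3, hA, hB, hQ, hR1, hR2, show x1 * P3 + P2 * y2 ≠ 0 by rwa [mul_comm P2]]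
    simp only [P1, P2, P3]
    ring
  have g3 : T (s x3) = s (T x3) := by
    rw [hs3, hT3, xb3, map_div₀, map_mul, hs3, hsP2, hsP3]
  have g4 : T (s y1) = s (T y1) := by
    rw [hT4, yb1, map_div₀, map_mul, hsP1, hsP3, hs4,
        map_div₀, map_mul, map_add, map_add, hT1, hT2, hT4, hT5]
    rw [xb1, xb2, yb1, yb2, ← add_div, div_add_div _ _ hP2 hP3]
    field_simp [hP1, hP2, hP3, hA, hB, hQ, hR1, hR2, show P3 * x1 + y2 * P2 ≠ 0 by rwa [mul_comm P3]]
    simp only [P1, P2, P3]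
    ring
  have g5 : T (s y2) = s (T y2) := by
    rw [hT5, yb2, map_div₀, map_mul, hsP2, hsP1, hs5,
        map_div₀, map_mul, map_add, map_add, hT1, hT2, hT4, hT5]
    rw [xb1, xb2, yb1, yb2, ← add_div, div_add_div _ _ hP2 hP3]
    field_simp [hP1, hP2, hP3, hA, hB, hQ, hR1, hR2]
    simp only [P1, P2, P3]
    ring
  have g6 : T (s y3) = s (T y3) := by
    rw [hs6, hT6, yb3, map_div₀, map_mul, hs6, hsP3, hsP2]
  -- extend from generators to all of `K`
  intro k
  have key : ((T : K →+* K).comp (s : K →+* K)) = ((s : K →+* K).comp (T : K →+* K)) := by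
    apply IsLocalization.ringHom_ext (nonZeroDivisors (MvPolynomial (Fin 6) ℂ))
    apply MvPolynomial.ringHom_ext
    · intro a
      simp only [RingHom.coe_comp, Function.comp_apply]
      have h1 : (algebraMap (MvPolynomial (Fin 6) ℂ) K) (MvPolynomial.C a)
          = algebraMap ℂ K a := by
        rw [← MvPolynomial.algebraMap_eq, ← IsScalarTower.algebraMap_apply]
      rw [h1]
      simp [AlgEquiv.commutes]
    · intro i
      simp only [RingHom.coe_comp, Function.comp_apply]
      fin_cases i
      · exact g1
      · exact g2
      · exact g3
      · exact g4
      · exact g5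
      · exact g6
  exact RingHom.congr_fun key k
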